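/- arXiv:1801.01108 — 3 statements merged into one kernel-verified Lean document; each statement's English description precedes it below -/
import Mathlib

section
/- Let V be a finite vertex set, M a matching on V, and G the complete graph on V minus the edges of M. Define α : V → ℝ by α(v) = 1/2 if v is covered by an edge of M and α(v) = 1 otherwise. Then α(v) > 0 for all v, and for every maximal independent set I of G one has Σ_{v ∈ I} α(v) = 1. Consequently G satisfies the (Subgraph) Local Pooling condition: there is a strictly positive weight vector whose inner product with the indicator vector of every maximal independent set is the same constant. -/
/-- `I` is an independent set of `G`: no two of its vertices are adjacent. -/
def IsIndepSet {V : Type*} (G : SimpleGraph V) (I : Finset V) : Prop :=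
  ∀ a ∈ I, ∀ b ∈ I, ¬ G.Adj a b

/-- `I` is a maximal independent set of `G`. -/
def IsMaximalIndepSet {V : Type*} (G : SimpleGraph V) (I : Finset V) : Prop :=
  IsIndepSet G I ∧ ∀ J : Finset V, IsIndepSet G J → I ⊆ J → J = I

/-- For a matching `M` on a finite (nonempty) vertex set `V` and
`G` the complete graph on `V` minus the edges of `M`, the weights
`α(v) = 1/2` for `v` covered by `M` and `α(v) = 1` otherwise are strictly
positive and sum to `1` over every maximal independent set of `G`; hence `G`
satisfies Subgraph Local Pooling. -/
theorem slop_completeMinusMatching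
    (V : Type*) [Fintype V] [DecidableEq V] [Nonempty V]
    (M : Finset (Sym2 V))
    (hM : ∀ e ∈ M, ¬ e.IsDiag)
    (hMdisj : ∀ e ∈ M, ∀ f ∈ M, e ≠ f → ∀ v : V, v ∈ e → v ∉ f)
    (α : V → ℝ)
    (hαcov : ∀ v : V, (∃ e ∈ M, v ∈ e) → α v = 1 / 2)
    (hαuncov : ∀ v : V, (¬ ∃ e ∈ M, v ∈ e) → α v = 1) :
    (∀ v : V, 0 < α v) ∧
    (∀ I : Finset V,
      IsMaximalIndepSet ((⊤ : SimpleGraph V).deleteEdges ↑M) I →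
        ∑ v ∈ I, α v = 1) ∧
    (∃ (β : V → ℝ) (c : ℝ), (∀ v : V, 0 < β v) ∧ 0 < c ∧
      ∀ I : Finset V,
        IsMaximalIndepSet ((⊤ : SimpleGraph V).deleteEdges ↑M) I →
          ∑ v ∈ I, β v = c) := by
  set G := (⊤ : SimpleGraph V).deleteEdges (↑M : Set (Sym2 V)) with hG
  have hAdj : ∀ a b : V, G.Adj a b ↔ a ≠ b ∧ s(a, b) ∉ M := by
    intro a b
    simp [hG, SimpleGraph.deleteEdges_adj]
  have hpos : ∀ v, 0 < α v := by
    intro v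
    by_cases h : ∃ e ∈ M, v ∈ e
    · rw [hαcov v h]; norm_num
    · rw [hαuncov v h]; norm_num
  have hsum : ∀ I : Finset V, IsMaximalIndepSet G I → ∑ v ∈ I, α v = 1 := by
    rintro I ⟨hind, hmax⟩
    have hne : I.Nonempty := by
      by_contra h
      rw [Finset.not_nonempty_iff_eq_empty] at h
      obtain ⟨v⟩ := ‹Nonempty V›
      have hJ : ({v} : Finset V) = I := by
        apply hmax
        · intro a ha b hb
          simp only [Finset.mem_singleton] at ha hb
          subst ha; subst hb
          exact G.irrefl
        · simp [h]
      rw [h] at hJ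
      simp at hJ
    obtain ⟨a, ha⟩ := hne
    by_cases hb : ∃ b ∈ I, b ≠ a
    · obtain ⟨b, hbI, hba⟩ := hb
      have hmem : s(a, b) ∈ M := by
        have h1 := hind a ha b hbI
        rw [hAdj] at h1
        push_neg at h1
        exact h1 hba.symm
      have hIab : I = {a, b} := by
        apply Finset.Subset.antisymm
        · intro c hc
          simp only [Finset.mem_insert, Finset.mem_singleton]
          by_contra hcnot
          push_neg at hcnot
          obtain ⟨hca, hcb⟩ := hcnot
          have hmem2 : s(a, c) ∈ M := by
            have h1 := hind a ha c hc
            rw [hAdj] at h1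
            push_neg at h1
            exact h1 hca.symm
          have hne : s(a, b) ≠ s(a, c) := by
            intro h
            rw [Sym2.eq_iff] at h
            rcases h with ⟨_, h⟩ | ⟨h1, h2⟩
            · exact hcb h.symm
            · exact hca h1.symm
          exact hMdisj _ hmem _ hmem2 hne a (by simp) (by simp)
        · intro c hc
          simp only [Finset.mem_insert, Finset.mem_singleton] at hc
          rcases hc with rfl | rfl
          · exact ha
          · exact hbI
      have hcova : α a = 1 / 2 := hαcov a ⟨s(a, b), hmem, by simp⟩
      have hcovb : α b = 1 / 2 := hαcov b ⟨s(a, b), hmem, by simp⟩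
      rw [hIab, Finset.sum_pair (Ne.symm hba), hcova, hcovb]
      norm_num
    · push_neg at hb
      have hIa : I = {a} := by
        apply Finset.Subset.antisymm
        · intro c hc
          simp [hb c hc]
        · intro c hc
          simp only [Finset.mem_singleton] at hc
          subst hc; exact ha
      have huncov : ¬ ∃ e ∈ M, a ∈ e := by
        rintro ⟨e, heM, hae⟩
        set w := Sym2.Mem.other hae with hw
        have hwe : w ∈ e := Sym2.other_mem hae
        have hspec : s(a, w) = e := Sym2.other_spec hae
        have hwa : w ≠ a := by
          intro h
          apply hM e heM
          rw [← hspec, h]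
          exact Sym2.mk_isDiag_iff.mpr rfl
        have hJ : ({a, w} : Finset V) = I := by
          apply hmax
          · intro x hx y hy
            simp only [Finset.mem_insert, Finset.mem_singleton] at hx hy
            rw [hAdj]
            rcases hx with rfl | rfl <;> rcases hy with rfl | rfl
            · rintro ⟨h, _⟩; exact h rfl
            · rintro ⟨_, h⟩; exact h (hspec ▸ heM)
            · rintro ⟨_, h⟩; apply h; rw [Sym2.eq_swap]; exact hspec ▸ heM
            · rintro ⟨h, _⟩; exact h rfl
          · rw [hIa]; intro x hx
            simp only [Finset.mem_singleton] at hx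
            simp [hx]
        rw [hIa] at hJ
        have : w ∈ ({a} : Finset V) := hJ ▸ (by simp : w ∈ ({a, w} : Finset V))
        simp at this
        exact hwa this
      rw [hIa, Finset.sum_singleton, hαuncov a huncov]
  exact ⟨hpos, hsum, α, 1, hpos, one_pos, hsum⟩
end

section
/- Let V be a finite vertex set, M a matching on V, and G the complete graph on V minus the edges of M. Then G satisfies Overall Local Pooling: for every nonempty subset S ⊆ V there exist a function α : V → ℝ with α(v) > 0 for all v ∈ S and a constant c > 0 such that for every maximal independent set I of the subgraph of G induced on S, Σ_{v ∈ I} α(v) = c. (This is the combinatorial core of Proposition 1: since the interference graph of any collocated heterogeneous HD-FD network is a complete graph minus a matching and satisfies OLoP, Greedy Maximal Scheduling is throughput-optimal in any such network, independent of the numbers N_F of full-duplex and N_H of half-duplex users.) -/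
/-- For a matching `M` on a finite vertex set `V` and `G` the
complete graph on `V` minus the edges of `M`, the graph `G` satisfies Overall
Local Pooling: for every nonempty `S ⊆ V` there are weights `α`, strictly
positive on `S`, and a constant `c > 0` such that every maximal independent
set of the subgraph of `G` induced on `S` has total `α`-weight `c`. -/
theorem olop_completeMinusMatching
    (V : Type*) [Fintype V] [DecidableEq V]
    (M : Finset (Sym2 V))
    (hM : ∀ e ∈ M, ¬ e.IsDiag)
    (hMdisj : ∀ e ∈ M, ∀ f ∈ M, e ≠ f → ∀ v : V, v ∈ e → v ∉ f) :
    ∀ S : Finset V, S.Nonempty →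
      ∃ (α : V → ℝ) (c : ℝ), 0 < c ∧ (∀ v ∈ S, 0 < α v) ∧
        ∀ I : Finset ↥(↑S : Set V),
          IsMaximalIndepSet
            (((⊤ : SimpleGraph V).deleteEdges ↑M).induce (↑S : Set V)) I →
            ∑ v ∈ I, α v.val = c := by
  classical
  intro S hS
  set P : V → Prop := fun v => ∃ u ∈ S, u ≠ v ∧ s(u, v) ∈ M with hP
  refine ⟨fun v => if P v then (1/2 : ℝ) else 1, 1, one_pos, ?_, ?_⟩
  · intro v _; by_cases h : P v <;> simp [h] <;> norm_num
  · have hadj : ∀ a b : ↥(↑S : Set V),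
        (((⊤ : SimpleGraph V).deleteEdges ↑M).induce (↑S : Set V)).Adj a b ↔
        ((a:V) ≠ b ∧ s((a:V),(b:V)) ∉ M) := by
      intro a b
      simp [SimpleGraph.deleteEdges_adj, Function.Embedding.coe_subtype]
    intro I hI
    obtain ⟨hind, hmax⟩ := hI
    -- key: distinct members of I are matched
    have hmem : ∀ a ∈ I, ∀ b ∈ I, a ≠ b → s((a:V),(b:V)) ∈ M := by
      intro a ha b hb hab
      have h := hind a ha b hb
      rw [hadj] at h
      push_neg at h
      exact h (fun hc => hab (Subtype.ext hc))
    -- I is nonempty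
    have hne : I.Nonempty := by
      by_contra h
      rw [Finset.not_nonempty_iff_eq_empty] at h
      obtain ⟨s, hs⟩ := hS
      have hJ : IsIndepSet (((⊤ : SimpleGraph V).deleteEdges ↑M).induce (↑S : Set V))
          ({⟨s, hs⟩} : Finset ↥(↑S : Set V)) := by
        intro a ha b hb
        simp only [Finset.mem_singleton] at ha hb
        subst ha; subst hb
        exact SimpleGraph.irrefl _
      have := hmax _ hJ (by simp [h])
      rw [h] at this; simp at this
    obtain ⟨a, ha⟩ := hne
    by_cases hpair : ∃ b ∈ I, b ≠ a
    · obtain ⟨b, hb, hba⟩ := hpair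
      have hab : s((a:V),(b:V)) ∈ M := hmem a ha b hb (Ne.symm hba)
      have hcoe : (a:V) ≠ (b:V) := fun h => hba (Subtype.ext h.symm)
      -- I = {a, b}
      have hI2 : I = {a, b} := by
        apply Finset.Subset.antisymm
        · intro c hc
          simp only [Finset.mem_insert, Finset.mem_singleton]
          by_contra hcontra
          push_neg at hcontra
          obtain ⟨hca, hcb⟩ := hcontra
          have hac : s((a:V),(c:V)) ∈ M := hmem a ha c hc (Ne.symm hca)
          have hcoec : (b:V) ≠ (c:V) := fun h => hcb (Subtype.ext h.symm)
          have hne2 : s((a:V),(b:V)) ≠ s((a:V),(c:V)) := by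
            simp [Sym2.eq_iff]
            exact ⟨fun h => hcoec (congrArg Subtype.val h), fun _ h2 => hcoe (congrArg Subtype.val h2.symm)⟩
          exact hMdisj _ hab _ hac hne2 (a:V) (by simp) (by simp)
        · intro c hc
          simp only [Finset.mem_insert, Finset.mem_singleton] at hc
          rcases hc with rfl | rfl <;> assumption
      rw [hI2, Finset.sum_pair (Ne.symm hba)]
      have hPa : P (a:V) := ⟨b, b.2, hcoe.symm, by rwa [Sym2.eq_swap] at hab⟩
      have hPb : P (b:V) := ⟨a, a.2, hcoe, hab⟩
      simp [hPa, hPb]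
      norm_num
    · push_neg at hpair
      have hI1 : I = {a} := by
        apply Finset.Subset.antisymm
        · intro c hc; simp [hpair c hc]
        · intro c hc; simp only [Finset.mem_singleton] at hc; subst hc; exact ha
      have hnPa : ¬ P (a:V) := by
        rintro ⟨u, hu, hua, hmem'⟩
        set b : ↥(↑S : Set V) := ⟨u, hu⟩
        have hJ : IsIndepSet (((⊤ : SimpleGraph V).deleteEdges ↑M).induce (↑S : Set V))
            (insert b I) := by
          intro x hx y hy
          rw [hadj]
          rw [hI1] at hx hy
          simp only [Finset.mem_insert, Finset.mem_singleton] at hx hy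
          push_neg
          intro hxy
          rcases hx with rfl | rfl <;> rcases hy with rfl | rfl
          · exact absurd rfl hxy
          · exact hmem'
          · rwa [Sym2.eq_swap]
          · exact absurd rfl hxy
        have := hmax _ hJ (Finset.subset_insert _ _)
        have hbI : b ∈ I := by rw [← this]; exact Finset.mem_insert_self _ _
        rw [hI1] at hbI
        simp only [Finset.mem_singleton] at hbI
        exact hua (congrArg Subtype.val hbI)
      rw [hI1]
      simp [hnPa]
end

section
/- Let V be a finite vertex set, M a matching on V, and G the complete graph on V minus the edges of M. For λ : V → ℝ with λ(v) ≥ 0 for all v, the following are equivalent: (i) there exists a point μ in the convex hull of the indicator vectors of the maximal independent sets of G with λ(v) ≤ μ(v) for all v; (ii) Σ_{v not covered by M} λ(v) + Σ_{{a,b} ∈ M} max(λ(a), λ(b)) ≤ 1. In other words, the capacity region Λ_HD-FD of a collocated heterogeneous HD-FD network is exactly the set of nonnegative arrival-rate vectors whose half-duplex link rates plus the maxima of each full-duplex user's uplink/downlink rate pair sum to at most 1. -/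
open scoped Classical

/-- The maximum of `l` over the two endpoints of an unordered pair. -/
noncomputable def sym2Max {V : Type*} (l : V → ℝ) : Sym2 V → ℝ :=
  Sym2.lift ⟨fun a b => max (l a) (l b), fun a b => max_comm (l a) (l b)⟩

section Aux

variable {V : Type*} [Fintype V] [DecidableEq V]

lemma sym2Max_mk (l : V → ℝ) (a b : V) : sym2Max l s(a, b) = max (l a) (l b) := rfl

lemma sym2Max_nonneg {l : V → ℝ} (hl : ∀ v, 0 ≤ l v) (e : Sym2 V) :
    0 ≤ sym2Max l e := by
  induction e using Sym2.ind with
  | _ x y => exact le_trans (hl x) (le_max_left _ _)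

lemma sym2Max_mono {l m : V → ℝ} (h : ∀ v, l v ≤ m v) (e : Sym2 V) :
    sym2Max l e ≤ sym2Max m e := by
  induction e using Sym2.ind with
  | _ x y => exact max_le_max (h x) (h y)

lemma le_sym2Max_of_mem {l : V → ℝ} {v : V} {e : Sym2 V} (hv : v ∈ e) :
    l v ≤ sym2Max l e := by
  induction e using Sym2.ind with
  | _ x y =>
    rcases Sym2.mem_iff.mp hv with rfl | rfl
    · exact le_max_left _ _
    · exact le_max_right _ _

lemma adj_iff (M : Finset (Sym2 V)) (a b : V) :
    ((⊤ : SimpleGraph V).deleteEdges ↑M).Adj a b ↔ a ≠ b ∧ s(a, b) ∉ M := by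
  simp [SimpleGraph.deleteEdges_adj]

lemma singleton_maximal (M : Finset (Sym2 V)) {a : V} (ha : ∀ e ∈ M, a ∉ e) :
    IsMaximalIndepSet ((⊤ : SimpleGraph V).deleteEdges ↑M) ({a} : Finset V) := by
  constructor
  · intro x hx y hy hadj
    simp only [Finset.mem_singleton] at hx hy
    subst hx; subst hy
    rw [adj_iff] at hadj
    exact hadj.1 rfl
  · intro J hJ hsub
    apply Finset.Subset.antisymm _ hsub
    intro c hc
    simp only [Finset.mem_singleton]
    by_contra hca
    have h2 := hJ a (hsub (by simp)) c hc
    rw [adj_iff] at h2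
    push_neg at h2
    have hm := h2 (fun h => hca h.symm)
    exact ha _ hm (by simp)

lemma pair_maximal (M : Finset (Sym2 V)) (hM : ∀ e ∈ M, ¬ e.IsDiag)
    (hMdisj : ∀ e ∈ M, ∀ f ∈ M, e ≠ f → ∀ v : V, v ∈ e → v ∉ f)
    {a b : V} (hab : a ≠ b) (he : s(a, b) ∈ M) :
    IsMaximalIndepSet ((⊤ : SimpleGraph V).deleteEdges ↑M) ({a, b} : Finset V) := by
  constructor
  · intro x hx y hy hadj
    rw [adj_iff] at hadj
    obtain ⟨hxy, hmem⟩ := hadj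
    simp only [Finset.mem_insert, Finset.mem_singleton] at hx hy
    apply hmem
    rcases hx with rfl | rfl <;> rcases hy with rfl | rfl
    · exact absurd rfl hxy
    · exact he
    · rwa [Sym2.eq_swap]
    · exact absurd rfl hxy
  · intro J hJ hsub
    apply Finset.Subset.antisymm _ hsub
    intro c hc
    by_contra hcn
    simp only [Finset.mem_insert, Finset.mem_singleton] at hcn
    push_neg at hcn
    obtain ⟨hca, hcb⟩ := hcn
    have h1 : s(a, c) ∈ M := by
      have h2 := hJ a (hsub (by simp)) c hc
      rw [adj_iff] at h2
      push_neg at h2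
      exact h2 (fun h => hca h.symm)
    have hne : s(a, c) ≠ s(a, b) := by
      rw [Ne, Sym2.eq_iff]
      push_neg
      exact ⟨fun _ => hcb, fun h => absurd h hab⟩
    exact hMdisj _ h1 _ he hne a (by simp) (by simp)

lemma maximal_char [Nonempty V] (M : Finset (Sym2 V)) (hM : ∀ e ∈ M, ¬ e.IsDiag)
    (hMdisj : ∀ e ∈ M, ∀ f ∈ M, e ≠ f → ∀ v : V, v ∈ e → v ∉ f)
    {I : Finset V} (hI : IsMaximalIndepSet ((⊤ : SimpleGraph V).deleteEdges ↑M) I) :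
    (∃ a, (∀ e ∈ M, a ∉ e) ∧ I = {a}) ∨
      (∃ a b, a ≠ b ∧ s(a, b) ∈ M ∧ I = {a, b}) := by
  obtain ⟨hind, hmax⟩ := hI
  rcases Finset.eq_empty_or_nonempty I with rfl | ⟨a, ha⟩
  · exfalso
    obtain ⟨v⟩ := ‹Nonempty V›
    have h2 := hmax {v} ?_ (Finset.empty_subset _)
    · exact Finset.singleton_ne_empty v h2
    · intro x hx y hy hadj
      simp only [Finset.mem_singleton] at hx hy
      subst hx; subst hy
      rw [adj_iff] at hadj
      exact hadj.1 rfl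
  by_cases hone : ∀ b ∈ I, b = a
  · have hIa : I = {a} := Finset.eq_singleton_iff_unique_mem.mpr ⟨ha, hone⟩
    left
    refine ⟨a, ?_, hIa⟩
    intro e he hae
    obtain ⟨b, rfl⟩ := Sym2.mem_iff_exists.mp hae
    have hab : a ≠ b := by
      intro h; subst h; exact hM _ he (by simp)
    have h2 := hmax {a, b} ((pair_maximal M hM hMdisj hab he).1) ?_
    · have hb : b ∈ ({a} : Finset V) := by rw [← hIa, ← h2]; simp
      simp only [Finset.mem_singleton] at hb
      exact hab hb.symm
    · rw [hIa]
      intro x hx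
      simp only [Finset.mem_singleton] at hx
      subst hx; simp
  · push_neg at hone
    obtain ⟨b, hb, hba⟩ := hone
    have hab : a ≠ b := fun h => hba h.symm
    have he : s(a, b) ∈ M := by
      have h2 := hind a ha b hb
      rw [adj_iff] at h2
      push_neg at h2
      exact h2 hab
    right
    refine ⟨a, b, hab, he, ?_⟩
    apply Finset.Subset.antisymm
    · intro c hc
      simp only [Finset.mem_insert, Finset.mem_singleton]
      by_contra hcn
      push_neg at hcn
      obtain ⟨hca, hcb⟩ := hcn
      have h1 : s(a, c) ∈ M := by
        have h2 := hind a ha c hc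
        rw [adj_iff] at h2
        push_neg at h2
        exact h2 (fun h => hca h.symm)
      have hne : s(a, c) ≠ s(a, b) := by
        rw [Ne, Sym2.eq_iff]
        push_neg
        exact ⟨fun _ => hcb, fun h => absurd h hab⟩
      exact hMdisj _ h1 _ he hne a (by simp) (by simp)
    · intro x hx
      simp only [Finset.mem_insert, Finset.mem_singleton] at hx
      rcases hx with rfl | rfl <;> assumption

lemma exists_maximal [Nonempty V] (M : Finset (Sym2 V)) (hM : ∀ e ∈ M, ¬ e.IsDiag)
    (hMdisj : ∀ e ∈ M, ∀ f ∈ M, e ≠ f → ∀ v : V, v ∈ e → v ∉ f) :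
    ∃ I : Finset V, IsMaximalIndepSet ((⊤ : SimpleGraph V).deleteEdges ↑M) I := by
  obtain ⟨a⟩ := ‹Nonempty V›
  by_cases h : ∀ e ∈ M, a ∉ e
  · exact ⟨{a}, singleton_maximal M h⟩
  · push_neg at h
    obtain ⟨e, he, hae⟩ := h
    obtain ⟨b, rfl⟩ := Sym2.mem_iff_exists.mp hae
    have hab : a ≠ b := by
      intro h; subst h; exact hM _ he (by simp)
    exact ⟨{a, b}, pair_maximal M hM hMdisj hab he⟩

lemma F_indicator [Nonempty V] (M : Finset (Sym2 V)) (hM : ∀ e ∈ M, ¬ e.IsDiag)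
    (hMdisj : ∀ e ∈ M, ∀ f ∈ M, e ≠ f → ∀ v : V, v ∈ e → v ∉ f)
    {I : Finset V} (hI : IsMaximalIndepSet ((⊤ : SimpleGraph V).deleteEdges ↑M) I) :
    (∑ v ∈ Finset.univ.filter (fun v : V => ∀ e ∈ M, v ∉ e),
        (if v ∈ I then (1 : ℝ) else 0)) +
      ∑ e ∈ M, sym2Max (fun v => if v ∈ I then (1 : ℝ) else 0) e = 1 := by
  rcases maximal_char M hM hMdisj hI with ⟨a, haU, rfl⟩ | ⟨a, b, hab, he, rfl⟩
  · have h1 : (∑ v ∈ Finset.univ.filter (fun v : V => ∀ e ∈ M, v ∉ e),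
        (if v ∈ ({a} : Finset V) then (1 : ℝ) else 0)) = 1 := by
      rw [Finset.sum_eq_single_of_mem a (by simpa using haU)]
      · simp
      · intro v _ hv
        simp [hv]
    have h2 : (∑ e ∈ M, sym2Max (fun v => if v ∈ ({a} : Finset V) then (1 : ℝ) else 0) e)
        = 0 := by
      apply Finset.sum_eq_zero
      intro e he
      induction e using Sym2.ind with
      | _ x y =>
        have hx : x ≠ a := fun h => haU _ he (h ▸ Sym2.mem_mk_left x y)
        have hy : y ≠ a := fun h => haU _ he (h ▸ Sym2.mem_mk_right x y)
        rw [sym2Max_mk]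
        simp [hx, hy]
    rw [h1, h2]; ring
  · have h1 : (∑ v ∈ Finset.univ.filter (fun v : V => ∀ e ∈ M, v ∉ e),
        (if v ∈ ({a, b} : Finset V) then (1 : ℝ) else 0)) = 0 := by
      apply Finset.sum_eq_zero
      intro v hv
      simp only [Finset.mem_filter, Finset.mem_univ, true_and] at hv
      have hva : v ≠ a := fun h => hv _ he (h ▸ Sym2.mem_mk_left a b)
      have hvb : v ≠ b := fun h => hv _ he (h ▸ Sym2.mem_mk_right a b)
      simp [hva, hvb]
    have h2 : (∑ e ∈ M, sym2Max (fun v => if v ∈ ({a, b} : Finset V) then (1 : ℝ) else 0) e)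
        = 1 := by
      rw [Finset.sum_eq_single_of_mem s(a, b) he]
      · rw [sym2Max_mk]; simp
      · intro f hf hfne
        induction f using Sym2.ind with
        | _ x y =>
          have hx : x ∉ s(a, b) := hMdisj _ hf _ he hfne x (Sym2.mem_mk_left x y)
          have hy : y ∉ s(a, b) := hMdisj _ hf _ he hfne y (Sym2.mem_mk_right x y)
          simp only [Sym2.mem_iff] at hx hy
          push_neg at hx hy
          rw [sym2Max_mk]
          simp [hx.1, hx.2, hy.1, hy.2]
    rw [h1, h2]; ring

lemma sym2Max_sum_le {ι : Type*} (t : Finset ι) (w : ι → ℝ) (z : ι → V → ℝ)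
    (hw : ∀ i ∈ t, 0 ≤ w i) (e : Sym2 V) :
    sym2Max (∑ i ∈ t, w i • z i) e ≤ ∑ i ∈ t, w i * sym2Max (z i) e := by
  induction e using Sym2.ind with
  | _ x y =>
    rw [sym2Max_mk]
    apply max_le
    · rw [Finset.sum_apply]
      apply Finset.sum_le_sum
      intro i hi
      rw [Pi.smul_apply, smul_eq_mul, sym2Max_mk]
      exact mul_le_mul_of_nonneg_left (le_max_left _ _) (hw i hi)
    · rw [Finset.sum_apply]
      apply Finset.sum_le_sum
      intro i hi
      rw [Pi.smul_apply, smul_eq_mul, sym2Max_mk]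
      exact mul_le_mul_of_nonneg_left (le_max_right _ _) (hw i hi)

end Aux

/-- For a matching `M` on a finite (nonempty) vertex set `V` and
`G` the complete graph on `V` minus the edges of `M`, a nonnegative
`λ : V → ℝ` is dominated by a point of the convex hull of the indicator
vectors of the maximal independent sets of `G` iff
`Σ_{v not covered by M} λ(v) + Σ_{{a,b} ∈ M} max(λ(a), λ(b)) ≤ 1`. -/
theorem capacityRegion_completeMinusMatching
    (V : Type*) [Fintype V] [DecidableEq V] [Nonempty V]
    (M : Finset (Sym2 V))
    (hM : ∀ e ∈ M, ¬ e.IsDiag)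
    (hMdisj : ∀ e ∈ M, ∀ f ∈ M, e ≠ f → ∀ v : V, v ∈ e → v ∉ f)
    (l : V → ℝ) (hl : ∀ v : V, 0 ≤ l v) :
    (∃ μ ∈ convexHull ℝ
        {x : V → ℝ | ∃ I : Finset V,
          IsMaximalIndepSet ((⊤ : SimpleGraph V).deleteEdges ↑M) I ∧
          x = fun v => if v ∈ I then (1 : ℝ) else 0},
      ∀ v : V, l v ≤ μ v) ↔
    (∑ v ∈ Finset.univ.filter (fun v : V => ∀ e ∈ M, v ∉ e), l v) +
      ∑ e ∈ M, sym2Max l e ≤ 1 := by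
  set U : Finset V := Finset.univ.filter (fun v : V => ∀ e ∈ M, v ∉ e) with hU
  set S : Set (V → ℝ) :=
    {x : V → ℝ | ∃ I : Finset V,
      IsMaximalIndepSet ((⊤ : SimpleGraph V).deleteEdges ↑M) I ∧
      x = fun v => if v ∈ I then (1 : ℝ) else 0} with hS
  constructor
  · rintro ⟨μ, hμ, hle⟩
    rw [convexHull_eq] at hμ
    obtain ⟨ι, t, w, z, hw0, hw1, hzS, hcm⟩ := hμ
    rw [Finset.centerMass_eq_of_sum_1 _ _ hw1] at hcm
    subst hcm
    have hle' : ∀ v, l v ≤ (∑ i ∈ t, w i • z i) v := hle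
    have key : ∀ i ∈ t,
        (∑ v ∈ U, z i v) + ∑ e ∈ M, sym2Max (z i) e = 1 := by
      intro i hi
      obtain ⟨I, hImax, hzi⟩ := hzS i hi
      rw [hzi]
      exact F_indicator M hM hMdisj hImax
    calc (∑ v ∈ U, l v) + ∑ e ∈ M, sym2Max l e
        ≤ (∑ v ∈ U, (∑ i ∈ t, w i • z i) v) +
            ∑ e ∈ M, sym2Max (∑ i ∈ t, w i • z i) e := by
          exact add_le_add (Finset.sum_le_sum fun v _ => hle' v)
            (Finset.sum_le_sum fun e _ => sym2Max_mono hle' e)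
      _ ≤ (∑ i ∈ t, w i * ∑ v ∈ U, z i v) +
            ∑ i ∈ t, w i * ∑ e ∈ M, sym2Max (z i) e := by
          apply add_le_add
          · apply le_of_eq
            simp_rw [Finset.sum_apply, Pi.smul_apply, smul_eq_mul]
            rw [Finset.sum_comm]
            simp_rw [Finset.mul_sum]
          · calc ∑ e ∈ M, sym2Max (∑ i ∈ t, w i • z i) e
                ≤ ∑ e ∈ M, ∑ i ∈ t, w i * sym2Max (z i) e :=
                  Finset.sum_le_sum fun e _ => sym2Max_sum_le t w z hw0 e
              _ = ∑ i ∈ t, w i * ∑ e ∈ M, sym2Max (z i) e := by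
                  rw [Finset.sum_comm]
                  simp_rw [Finset.mul_sum]
      _ = ∑ i ∈ t, w i * ((∑ v ∈ U, z i v) + ∑ e ∈ M, sym2Max (z i) e) := by
          rw [← Finset.sum_add_distrib]
          exact Finset.sum_congr rfl fun i _ => (mul_add _ _ _).symm
      _ = ∑ i ∈ t, w i := Finset.sum_congr rfl fun i hi => by rw [key i hi, mul_one]
      _ = 1 := hw1
  · intro h
    obtain ⟨I₀, hI₀⟩ := exists_maximal M hM hMdisj
    set S0 : ℝ := (∑ v ∈ U, l v) + ∑ e ∈ M, sym2Max l e with hS0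
    set t : Finset (Option (Sym2 V ⊕ V)) :=
      insert none (Finset.image some (M.disjSum U)) with ht
    set w : Option (Sym2 V ⊕ V) → ℝ :=
      fun i => i.elim (1 - S0) (Sum.elim (fun e => sym2Max l e) l) with hw
    set z : Option (Sym2 V ⊕ V) → (V → ℝ) :=
      fun i => i.elim (fun v => if v ∈ I₀ then (1 : ℝ) else 0)
        (Sum.elim (fun e v => if v ∈ e then (1 : ℝ) else 0)
          (fun a v => if v ∈ ({a} : Finset V) then (1 : ℝ) else 0)) with hz
    have hnone : none ∉ Finset.image some (M.disjSum U) := by simp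
    have hw0 : ∀ i ∈ t, 0 ≤ w i := by
      intro i _
      match i with
      | none => simpa [hw] using sub_nonneg.mpr h
      | some (Sum.inl e) => exact sym2Max_nonneg hl e
      | some (Sum.inr v) => exact hl v
    have hwsum : ∑ i ∈ t, w i = 1 := by
      rw [ht, Finset.sum_insert hnone,
        Finset.sum_image (fun x _ y _ hxy => Option.some_injective _ hxy),
        Finset.sum_disjSum]
      simp only [hw, Option.elim, Sum.elim_inl, Sum.elim_inr]
      rw [hS0]; ring
    have hzS : ∀ i ∈ t, z i ∈ convexHull ℝ S := by
      intro i hi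
      apply subset_convexHull
      rw [ht, Finset.mem_insert] at hi
      rcases hi with rfl | hi
      · exact ⟨I₀, hI₀, rfl⟩
      · simp only [Finset.mem_image] at hi
        obtain ⟨x, hx, rfl⟩ := hi
        rcases x with e | a
        · rw [Finset.inl_mem_disjSum] at hx
          induction e using Sym2.ind with
          | _ a b =>
            have hab : a ≠ b := by
              intro hEq; subst hEq; exact hM _ hx (by simp)
            refine ⟨{a, b}, pair_maximal M hM hMdisj hab hx, ?_⟩
            funext v
            simp only [hz, Option.elim, Sum.elim_inl]
            by_cases hv : v = a ∨ v = b
            · rw [if_pos (Sym2.mem_iff.mpr hv), if_pos (by simpa using hv)]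
            · rw [if_neg (fun hm => hv (Sym2.mem_iff.mp hm)),
                if_neg (by simpa using hv)]
        · rw [Finset.inr_mem_disjSum, hU, Finset.mem_filter] at hx
          exact ⟨{a}, singleton_maximal M hx.2, rfl⟩
    refine ⟨∑ i ∈ t, w i • z i,
      Convex.sum_mem (convex_convexHull ℝ S) hw0 hwsum hzS, ?_⟩
    intro v
    rw [Finset.sum_apply]
    have hterm_nonneg : ∀ i ∈ t, 0 ≤ (w i • z i) v := by
      intro i hi
      rw [Pi.smul_apply, smul_eq_mul]
      apply mul_nonneg (hw0 i hi)
      match i with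
      | none => simp only [hz, Option.elim]; positivity
      | some (Sum.inl e) => simp only [hz, Option.elim, Sum.elim_inl]; positivity
      | some (Sum.inr a) => simp only [hz, Option.elim, Sum.elim_inr]; positivity
    by_cases hv : ∀ e ∈ M, v ∉ e
    · have hi₀ : some (Sum.inr v) ∈ t := by
        rw [ht, Finset.mem_insert]
        right
        exact Finset.mem_image_of_mem _ (Finset.inr_mem_disjSum.mpr
          (by rw [hU, Finset.mem_filter]; exact ⟨Finset.mem_univ v, hv⟩))
      refine le_trans ?_ (Finset.single_le_sum hterm_nonneg hi₀)
      simp [hw, hz]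
    · push_neg at hv
      obtain ⟨e, he, hve⟩ := hv
      have hi₀ : some (Sum.inl e) ∈ t := by
        rw [ht, Finset.mem_insert]
        right
        exact Finset.mem_image_of_mem _ (Finset.inl_mem_disjSum.mpr he)
      refine le_trans ?_ (Finset.single_le_sum hterm_nonneg hi₀)
      have : (w (some (Sum.inl e)) • z (some (Sum.inl e))) v = sym2Max l e := by
        simp [hw, hz, hve]
      rw [this]
      exact le_sym2Max_of_mem hve
end
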